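/- arXiv:0904.3305 — 3 statements merged into one kernel-verified Lean document; each statement's English description precedes it below -/
import Mathlib

section
/- Let X(t) = S(t)X₀ + ∫₀ᵗ S(t−s) a(s) ds for t ∈ [0,T]. Then for every t ∈ [0,T], ‖X(t)‖² ≤ e^{2λt} ‖X₀‖² + 2 ∫₀ᵗ e^{2λ(t−s)} ⟨X(s), a(s)⟩ ds. (Energy-type inequality, Proposition 2.3.) -/
/-!
For `0 ≤ s ≤ u` the mild solution satisfies `X u = S (u - s) (X s) + J` with
`J = ∫ r in s..u, S (u - r) (a r)`, so expanding `‖X u‖² = ‖X u - J‖² + 2⟪X u, J⟫ - ‖J‖²` gives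
`‖X u‖² ≤ e^{2λ(u-s)} ‖X s‖² + 2 ∫ r in s..u, ⟪X u, S (u - r) (a r)⟫`.
Weighting by `e^{2λ(t-u)}` and telescoping over a uniform partition of `[0, t]` yields the energy
inequality with the integrand `e^{2λ(t-r)} ⟪X r, a r⟫` replaced by
`e^{2λ(t-u)} ⟪X u, S (u - r) (a r)⟫`, where `u = gridCeil h r` is the partition point just right
of `r`. As the mesh goes to zero, right continuity of `X` and strong continuity of `S`
give pointwise convergence of these integrands, and dominated convergence finishes the proof.
-/

open MeasureTheory Filter Topology Set Real
open scoped Interval RealInnerProductSpace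

noncomputable def gridCeil (h r : ℝ) : ℝ := ⌈r / h⌉₊ * h

section gridCeil

variable {h r : ℝ}

theorem le_gridCeil (hh : 0 < h) : r ≤ gridCeil h r :=
  (div_le_iff₀ hh).1 (Nat.le_ceil _)

theorem gridCeil_lt_add (hh : 0 < h) (hr : 0 ≤ r) : gridCeil h r < r + h := by
  have := Nat.ceil_lt_add_one (div_nonneg hr hh.le)
  calc (⌈r / h⌉₊ : ℝ) * h < (r / h + 1) * h := by gcongr
    _ = r + h := by field_simp

theorem gridCeil_le {n : ℕ} (hh : 0 < h) (hr : r ≤ n * h) : gridCeil h r ≤ n * h := by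
  rw [gridCeil]
  gcongr
  exact Nat.ceil_le.2 ((div_le_iff₀ hh).2 hr)

theorem gridCeil_eq_of_mem_Ioc {k : ℕ} (hh : 0 < h) (hr : r ∈ Ioc (k * h) ((k + 1 : ℕ) * h)) :
    gridCeil h r = (k + 1 : ℕ) * h := by
  have hceil : ⌈r / h⌉₊ = k + 1 := by
    rw [Nat.ceil_eq_iff k.succ_ne_zero, Nat.succ_sub_one, lt_div_iff₀ hh, div_le_iff₀ hh]
    exact hr
  rw [gridCeil, hceil]

theorem tendsto_gridCeil {t : ℝ} (hr : r ∈ Ioc 0 t) :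
    Tendsto (fun n : ℕ => gridCeil (t / n) r) atTop (𝓝[Icc r t] r) := by
  have hpos : ∀ᶠ n : ℕ in atTop, 0 < t / n :=
    (eventually_gt_atTop 0).mono fun n hn => div_pos (hr.1.trans_le hr.2) (Nat.cast_pos.2 hn)
  refine tendsto_nhdsWithin_iff.2 ⟨?_, ?_⟩
  · refine tendsto_of_tendsto_of_tendsto_of_le_of_le' tendsto_const_nhds
      (by simpa using tendsto_const_nhds.add (tendsto_const_div_atTop_nhds_zero_nat t))
      (hpos.mono fun n hn => le_gridCeil hn)
      (hpos.mono fun n hn => (gridCeil_lt_add hn hr.1.le).le)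
  · filter_upwards [eventually_gt_atTop 0, hpos] with n hn hh
    have htn : (n : ℝ) * (t / n) = t := by field_simp
    exact ⟨le_gridCeil hh, (gridCeil_le hh (hr.2.trans htn.ge)).trans htn.le⟩

theorem grid_bounds (hh : 0 ≤ h) {n k : ℕ} (hk : k < n) :
    0 ≤ (k : ℝ) * h ∧ (k : ℝ) * h ≤ (k + 1 : ℕ) * h ∧ ((k + 1 : ℕ) : ℝ) * h ≤ n * h :=
  ⟨by positivity, by gcongr; simp, by gcongr; exact_mod_cast hk⟩

end gridCeil

section Discretization

variable {φ f bound : ℝ → ℝ} {g : ℝ → ℝ → ℝ} {h : ℝ}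

theorem eqOn_gridCeil (hh : 0 < h) (k : ℕ) :
    EqOn (fun r => g (gridCeil h r) r) (g ((k + 1 : ℕ) * h))
      (Ι ((k : ℝ) * h) ((k + 1 : ℕ) * h)) := by
  intro r hr
  rw [uIoc_of_le (by gcongr; simp)] at hr
  simp only [gridCeil_eq_of_mem_Ioc hh hr]

theorem intervalIntegrable_gridCeil_of_lt (hh : 0 < h) {n k : ℕ} (hk : k < n)
    (hint : ∀ s u, 0 ≤ s → s ≤ u → u ≤ n * h → IntervalIntegrable (g u) volume s u) :
    IntervalIntegrable (fun r => g (gridCeil h r) r) volume (k * h) ((k + 1 : ℕ) * h) :=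
  let ⟨h₀, h₁, h₂⟩ := grid_bounds hh.le hk
  (hint _ _ h₀ h₁ h₂).congr (eqOn_gridCeil hh k).symm

theorem intervalIntegrable_gridCeil (hh : 0 < h) (n : ℕ)
    (hint : ∀ s u, 0 ≤ s → s ≤ u → u ≤ n * h → IntervalIntegrable (g u) volume s u) :
    IntervalIntegrable (fun r => g (gridCeil h r) r) volume 0 (n * h) := by
  simpa using IntervalIntegrable.trans_iterate (a := fun k : ℕ => (k : ℝ) * h)
    fun k hk => intervalIntegrable_gridCeil_of_lt hh hk hint

theorem sub_le_integral_gridCeil (hh : 0 < h) (n : ℕ)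
    (hstep : ∀ s u, 0 ≤ s → s ≤ u → u ≤ n * h → φ u - φ s ≤ ∫ r in s..u, g u r)
    (hint : ∀ s u, 0 ≤ s → s ≤ u → u ≤ n * h → IntervalIntegrable (g u) volume s u) :
    φ (n * h) - φ 0 ≤ ∫ r in 0..n * h, g (gridCeil h r) r := by
  calc φ (n * h) - φ 0
      = ∑ k ∈ Finset.range n, (φ ((k + 1 : ℕ) * h) - φ (k * h)) := by
        rw [Finset.sum_range_sub (fun k : ℕ => φ (k * h))]; simp
    _ ≤ ∑ k ∈ Finset.range n, ∫ r in (k : ℝ) * h..(k + 1 : ℕ) * h, g ((k + 1 : ℕ) * h) r :=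
        Finset.sum_le_sum fun k hk =>
          let ⟨h₀, h₁, h₂⟩ := grid_bounds hh.le (Finset.mem_range.1 hk)
          hstep _ _ h₀ h₁ h₂
    _ = ∑ k ∈ Finset.range n, ∫ r in (k : ℝ) * h..(k + 1 : ℕ) * h, g (gridCeil h r) r :=
        Finset.sum_congr rfl fun k _ => intervalIntegral.integral_congr_ae
          (ae_of_all _ fun _ hr => (eqOn_gridCeil hh k hr).symm)
    _ = ∫ r in 0..n * h, g (gridCeil h r) r := by
        simpa using intervalIntegral.sum_integral_adjacent_intervals
          (a := fun k : ℕ => (k : ℝ) * h) fun k hk => intervalIntegrable_gridCeil_of_lt hh hk hint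

theorem sub_le_integral_of_tendsto {t : ℝ} (ht : 0 ≤ t)
    (hstep : ∀ s u, 0 ≤ s → s ≤ u → u ≤ t → φ u - φ s ≤ ∫ r in s..u, g u r)
    (hint : ∀ s u, 0 ≤ s → s ≤ u → u ≤ t → IntervalIntegrable (g u) volume s u)
    (hbound : ∀ u ≤ t, ∀ r ∈ Ioc 0 u, ‖g u r‖ ≤ bound r)
    (hbound_int : IntervalIntegrable bound volume 0 t)
    (hlim : ∀ r ∈ Ioc 0 t, Tendsto (fun u => g u r) (𝓝[Icc r t] r) (𝓝 (f r))) :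
    φ t - φ 0 ≤ ∫ r in 0..t, f r := by
  rcases ht.eq_or_lt with rfl | ht
  · simp
  have hgrid : ∀ᶠ n : ℕ in atTop, 0 < t / n ∧ (n : ℝ) * (t / n) = t :=
    (eventually_gt_atTop 0).mono fun n hn => ⟨by positivity, by field_simp⟩
  have hdisc : ∀ᶠ n : ℕ in atTop, φ t - φ 0 ≤ ∫ r in 0..t, g (gridCeil (t / n) r) r := by
    filter_upwards [hgrid] with n ⟨hh, hn⟩
    have := sub_le_integral_gridCeil hh n (fun s u h₀ h₁ h₂ => hstep s u h₀ h₁ (h₂.trans hn.le))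
      (fun s u h₀ h₁ h₂ => hint s u h₀ h₁ (h₂.trans hn.le))
    rwa [hn] at this
  have hconv : Tendsto (fun n : ℕ => ∫ r in 0..t, g (gridCeil (t / n) r) r) atTop
      (𝓝 (∫ r in 0..t, f r)) := by
    refine intervalIntegral.tendsto_integral_filter_of_dominated_convergence bound ?_ ?_
      hbound_int ?_ <;> rw [uIoc_of_le ht.le]
    · filter_upwards [hgrid] with n ⟨hh, hn⟩
      have := intervalIntegrable_gridCeil hh n
        (fun s u h₀ h₁ h₂ => hint s u h₀ h₁ (h₂.trans hn.le))
      rw [hn, intervalIntegrable_iff_integrableOn_Ioc_of_le ht.le] at this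
      exact this.aestronglyMeasurable
    · filter_upwards [hgrid] with n ⟨hh, hn⟩
      refine ae_of_all _ fun r hr => hbound _ ?_ r ⟨hr.1, le_gridCeil hh⟩
      exact (gridCeil_le hh (hr.2.trans hn.ge)).trans hn.le
    · exact ae_of_all _ fun r hr => (hlim r hr).comp (tendsto_gridCeil hr)
  exact ge_of_tendsto hconv hdisc

end Discretization

theorem ContinuousLinearMap.continuous_uncurry_of_norm_le {𝕜 X E F : Type*}
    [NontriviallyNormedField 𝕜] [TopologicalSpace X] [SeminormedAddCommGroup E] [NormedSpace 𝕜 E]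
    [SeminormedAddCommGroup F] [NormedSpace 𝕜 F] {A : X → E →L[𝕜] F} {B : X → ℝ}
    (hA : ∀ v, Continuous fun p => A p v) (hB : Continuous B) (hAB : ∀ p, ‖A p‖ ≤ B p) :
    Continuous fun q : X × E => A q.1 q.2 := by
  refine continuous_iff_continuousAt.2 fun q => ?_
  rw [ContinuousAt, tendsto_iff_norm_sub_tendsto_zero]
  have hdom : Continuous fun q' : X × E => B q'.1 * ‖q'.2 - q.2‖ + ‖A q'.1 q.2 - A q.1 q.2‖ :=
    ((hB.comp continuous_fst).mul (continuous_snd.sub continuous_const).norm).add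
      (((hA q.2).comp continuous_fst).sub continuous_const).norm
  refine squeeze_zero (fun _ => norm_nonneg _) (fun q' => ?_) (by simpa using hdom.tendsto q)
  calc ‖A q'.1 q'.2 - A q.1 q.2‖ = ‖A q'.1 (q'.2 - q.2) + (A q'.1 q.2 - A q.1 q.2)‖ := by
        rw [map_sub, sub_add_sub_cancel]
    _ ≤ B q'.1 * ‖q'.2 - q.2‖ + ‖A q'.1 q.2 - A q.1 q.2‖ :=
        (norm_add_le _ _).trans (add_le_add_left ((A q'.1).le_of_opNorm_le (hAB _) _) _)

structure IsQuasiContractionSemigroup {H : Type*} [NormedAddCommGroup H] [NormedSpace ℝ H]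
    (S : ℝ → H →L[ℝ] H) (lam : ℝ) : Prop where
  zero_eq_id : S 0 = ContinuousLinearMap.id ℝ H
  add_eq_comp : ∀ s t : ℝ, 0 ≤ s → 0 ≤ t → S (s + t) = (S s).comp (S t)
  continuousOn_apply : ∀ x : H, ContinuousOn (fun t => S t x) (Ici 0)
  norm_le : ∀ t : ℝ, 0 ≤ t → ‖S t‖ ≤ exp (lam * t)

noncomputable def mildSolution {H : Type*} [NormedAddCommGroup H] [NormedSpace ℝ H]
    (S : ℝ → H →L[ℝ] H) (X₀ : H) (a : ℝ → H) (t : ℝ) : H :=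
  S t X₀ + ∫ s in (0 : ℝ)..t, S (t - s) (a s)

namespace IsQuasiContractionSemigroup

section Semigroup

variable {H : Type*} [NormedAddCommGroup H] [NormedSpace ℝ H] {S : ℝ → H →L[ℝ] H} {lam : ℝ}
  {a : ℝ → H}

theorem norm_apply_le (hS : IsQuasiContractionSemigroup S lam) {τ c : ℝ} (hτ : 0 ≤ τ)
    (hτc : τ ≤ c) (x : H) : ‖S τ x‖ ≤ exp (|lam| * c) * ‖x‖ :=
  (S τ).le_of_opNorm_le ((hS.norm_le τ hτ).trans (exp_le_exp.2
    (by nlinarith [le_abs_self lam, abs_nonneg lam]))) x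

theorem tendsto_apply_sub (hS : IsQuasiContractionSemigroup S lam) (r : ℝ) (x : H) :
    Tendsto (fun u => S (u - r) x) (𝓝[≥] r) (𝓝 x) := by
  have h0 := (hS.continuousOn_apply x 0 self_mem_Ici).tendsto
  rw [hS.zero_eq_id, ContinuousLinearMap.id_apply] at h0
  refine h0.comp (tendsto_nhdsWithin_iff.2 ⟨?_, ?_⟩)
  · simpa using ((continuous_sub_right r).tendsto r).mono_left nhdsWithin_le_nhds
  · exact eventually_nhdsWithin_of_forall fun u hu => mem_Ici.2 (sub_nonneg.2 hu)

theorem aestronglyMeasurable_conv (hS : IsQuasiContractionSemigroup S lam) {s : Set ℝ} {c : ℝ}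
    (hs : MeasurableSet s) (hsc : s ⊆ Iic c) (ha : AEStronglyMeasurable a (volume.restrict s)) :
    AEStronglyMeasurable (fun r => S (c - r) (a r)) (volume.restrict s) := by
  -- `S` is only strongly continuous; freezing it at `S 0` for negative times lets the
  -- exponential bound make `(τ, x) ↦ S τ x` jointly continuous on all of `ℝ × H`.
  have hjoint : Continuous fun q : ℝ × H => S (max q.1 0) q.2 :=
    ContinuousLinearMap.continuous_uncurry_of_norm_le
      (fun x => (hS.continuousOn_apply x).comp_continuous (continuous_id.max continuous_const)
        fun _ => mem_Ici.2 (le_max_right _ _))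
      (continuous_exp.comp (continuous_const.mul (continuous_id.max continuous_const)))
      fun τ => hS.norm_le _ (le_max_right τ 0)
  refine (hjoint.comp_aestronglyMeasurable
    ((continuous_sub_left c).aestronglyMeasurable.prodMk ha)).congr ?_
  exact ae_restrict_of_forall_mem hs fun r hr => by
    simp [max_eq_left (sub_nonneg.2 (mem_Iic.1 (hsc hr)))]

theorem intervalIntegrable_conv (hS : IsQuasiContractionSemigroup S lam) {α β c : ℝ}
    (hα : 0 ≤ α) (hαβ : α ≤ β) (hβc : β ≤ c) (ha : IntegrableOn a (Icc 0 c)) :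
    IntervalIntegrable (fun r => S (c - r) (a r)) volume α β := by
  have hsub : Ioc α β ⊆ Icc 0 c := fun r hr => ⟨hα.trans hr.1.le, hr.2.trans hβc⟩
  rw [intervalIntegrable_iff_integrableOn_Ioc_of_le hαβ]
  refine Integrable.mono' ((ha.mono_set hsub).norm.const_mul (exp (|lam| * c)))
    (hS.aestronglyMeasurable_conv measurableSet_Ioc (hsub.trans Icc_subset_Iic_self)
      (ha.mono_set hsub).aestronglyMeasurable)
    (ae_restrict_of_forall_mem measurableSet_Ioc fun r hr => ?_)
  exact hS.norm_apply_le (by linarith [hr.2]) (by linarith [hr.1]) _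

theorem norm_integral_conv_le (hS : IsQuasiContractionSemigroup S lam) {α β c T : ℝ}
    (hα : 0 ≤ α) (hαβ : α ≤ β) (hβc : β ≤ c) (hcT : c ≤ T)
    (ha : IntervalIntegrable (fun r => ‖a r‖) volume α β) :
    ‖∫ r in α..β, S (c - r) (a r)‖ ≤ exp (|lam| * T) * ∫ r in α..β, ‖a r‖ := by
  rw [← intervalIntegral.integral_const_mul]
  exact intervalIntegral.norm_integral_le_of_norm_le hαβ
    (ae_of_all _ fun r hr => hS.norm_apply_le (by linarith [hr.2]) (by linarith [hr.1]) _)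
    (ha.const_mul _)

end Semigroup

section MildSolution

variable {H : Type*} [NormedAddCommGroup H] [NormedSpace ℝ H] {S : ℝ → H →L[ℝ] H} {lam : ℝ}
  {X₀ : H} {a : ℝ → H}

theorem mildSolution_zero (hS : IsQuasiContractionSemigroup S lam) :
    mildSolution S X₀ a 0 = X₀ := by
  simp [mildSolution, hS.zero_eq_id]

theorem norm_mildSolution_le (hS : IsQuasiContractionSemigroup S lam) {T u : ℝ}
    (hu : u ∈ Icc 0 T) (ha : IntegrableOn a (Icc 0 T)) :
    ‖mildSolution S X₀ a u‖ ≤ exp (|lam| * T) * (‖X₀‖ + ∫ r in (0 : ℝ)..T, ‖a r‖) := by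
  have ha' : IntervalIntegrable (fun r => ‖a r‖) volume 0 T :=
    (intervalIntegrable_iff_integrableOn_Icc_of_le (hu.1.trans hu.2)).2 ha.norm
  have hconv : ‖∫ r in (0 : ℝ)..u, S (u - r) (a r)‖
      ≤ exp (|lam| * T) * ∫ r in (0 : ℝ)..T, ‖a r‖ := by
    refine (hS.norm_integral_conv_le le_rfl hu.1 le_rfl hu.2
      (ha'.mono_set (uIcc_subset_uIcc_left (mem_uIcc_of_le hu.1 hu.2)))).trans ?_
    gcongr
    exact intervalIntegral.integral_mono_interval le_rfl hu.1 hu.2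
      (ae_of_all _ fun _ => norm_nonneg _) ha'
  calc ‖mildSolution S X₀ a u‖
      ≤ exp (|lam| * T) * ‖X₀‖ + exp (|lam| * T) * ∫ r in (0 : ℝ)..T, ‖a r‖ :=
        (norm_add_le _ _).trans (add_le_add (hS.norm_apply_le hu.1 hu.2 _) hconv)
    _ = _ := by ring

variable [CompleteSpace H]

theorem mildSolution_eq_add_integral (hS : IsQuasiContractionSemigroup S lam) {s u : ℝ}
    (hs : 0 ≤ s) (hsu : s ≤ u) (ha : IntegrableOn a (Icc 0 u)) :
    mildSolution S X₀ a u = S (u - s) (mildSolution S X₀ a s) + ∫ r in s..u, S (u - r) (a r) := by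
  have hcomp : ∀ r ≤ s, S (u - s) ∘L S (s - r) = S (u - r) := fun r hr => by
    rw [← hS.add_eq_comp _ _ (sub_nonneg.2 hsu) (sub_nonneg.2 hr), sub_add_sub_cancel]
  have hint : ∀ c, s ≤ c → c ≤ u → IntervalIntegrable (fun r => S (c - r) (a r)) volume 0 s :=
    fun c hsc hcu => hS.intervalIntegrable_conv le_rfl hs hsc
      (ha.mono_set (Icc_subset_Icc le_rfl hcu))
  have hpast : S (u - s) (∫ r in (0 : ℝ)..s, S (s - r) (a r))
      = ∫ r in (0 : ℝ)..s, S (u - r) (a r) := by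
    rw [← (S (u - s)).intervalIntegral_comp_comm (hint s le_rfl hsu)]
    refine intervalIntegral.integral_congr fun r hr => ?_
    rw [uIcc_of_le hs] at hr
    simp only [← hcomp r hr.2, ContinuousLinearMap.comp_apply]
  have hnow : S (u - s) ∘L S s = S u := by simpa using hcomp 0 hs
  rw [mildSolution, mildSolution, map_add, ← ContinuousLinearMap.comp_apply, hnow, hpast,
    add_assoc, intervalIntegral.integral_add_adjacent_intervals (hint u hsu le_rfl)
      (hS.intervalIntegrable_conv hs hsu le_rfl ha)]

theorem tendsto_mildSolution_nhdsWithin_Icc (hS : IsQuasiContractionSemigroup S lam) {r T : ℝ}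
    (hr : 0 ≤ r) (hrT : r ≤ T) (ha : IntegrableOn a (Icc 0 T)) :
    Tendsto (mildSolution S X₀ a) (𝓝[Icc r T] r) (𝓝 (mildSolution S X₀ a r)) := by
  have ha' : IntervalIntegrable (fun s => ‖a s‖) volume r T :=
    (intervalIntegrable_iff_integrableOn_Icc_of_le hrT).2
      (ha.mono_set (Icc_subset_Icc hr le_rfl)).norm
  have hprim : Tendsto (fun u => ∫ s in r..u, ‖a s‖) (𝓝[Icc r T] r) (𝓝 0) := by
    have := intervalIntegral.continuousOn_primitive_interval' ha' left_mem_uIcc r left_mem_uIcc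
    rw [uIcc_of_le hrT] at this
    simpa using this.tendsto
  have hJ : Tendsto (fun u => ∫ s in r..u, S (u - s) (a s)) (𝓝[Icc r T] r) (𝓝 0) := by
    refine squeeze_zero_norm' ?_ (by simpa using hprim.const_mul (exp (|lam| * T)))
    filter_upwards [self_mem_nhdsWithin] with u hu
    exact hS.norm_integral_conv_le hr hu.1 le_rfl hu.2
      (ha'.mono_set (uIcc_subset_uIcc_left (mem_uIcc_of_le hu.1 hu.2)))
  have hfree := (hS.tendsto_apply_sub r (mildSolution S X₀ a r)).mono_left
    (nhdsWithin_mono _ (Icc_subset_Ici_self : Icc r T ⊆ Ici r))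
  refine (by simpa using hfree.add hJ : Tendsto _ _ _).congr'
    (eventually_nhdsWithin_of_forall fun u hu => ?_)
  exact (hS.mildSolution_eq_add_integral hr hu.1 (ha.mono_set (Icc_subset_Icc le_rfl hu.2))).symm

end MildSolution

section Energy

variable {H : Type*} [NormedAddCommGroup H] [InnerProductSpace ℝ H] {S : ℝ → H →L[ℝ] H}
  {lam : ℝ} {X₀ : H} {a : ℝ → H}

theorem norm_inner_mildSolution_le (hS : IsQuasiContractionSemigroup S lam) {T u r : ℝ}
    (hr : 0 ≤ r) (hru : r ≤ u) (huT : u ≤ T) (ha : IntegrableOn a (Icc 0 T)) :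
    ‖⟪mildSolution S X₀ a u, S (u - r) (a r)⟫‖
      ≤ exp (|lam| * T) * (‖X₀‖ + ∫ s in (0 : ℝ)..T, ‖a s‖) * exp (|lam| * T) * ‖a r‖ := by
  have hX := hS.norm_mildSolution_le (X₀ := X₀) ⟨hr.trans hru, huT⟩ ha
  rw [mul_assoc _ (exp _)]
  exact (norm_inner_le_norm _ _).trans (mul_le_mul hX
    (hS.norm_apply_le (sub_nonneg.2 hru) (by linarith) _) (norm_nonneg _)
    ((norm_nonneg _).trans hX))

theorem intervalIntegrable_inner_conv (hS : IsQuasiContractionSemigroup S lam) (x : H) {s u : ℝ}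
    (hs : 0 ≤ s) (hsu : s ≤ u) (ha : IntegrableOn a (Icc 0 u)) :
    IntervalIntegrable (fun r => ⟪x, S (u - r) (a r)⟫) volume s u :=
  have h := hS.intervalIntegrable_conv hs hsu le_rfl ha
  ⟨h.1.const_inner x, h.2.const_inner x⟩

variable [CompleteSpace H]

theorem tendsto_inner_mildSolution (hS : IsQuasiContractionSemigroup S lam) {r T : ℝ}
    (hr : 0 ≤ r) (hrT : r ≤ T) (ha : IntegrableOn a (Icc 0 T)) (y : H) :
    Tendsto (fun u => ⟪mildSolution S X₀ a u, S (u - r) y⟫) (𝓝[Icc r T] r)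
      (𝓝 ⟪mildSolution S X₀ a r, y⟫) :=
  (hS.tendsto_mildSolution_nhdsWithin_Icc hr hrT ha).inner
    ((hS.tendsto_apply_sub r y).mono_left
      (nhdsWithin_mono _ (Icc_subset_Ici_self : Icc r T ⊆ Ici r)))

theorem norm_mildSolution_sq_le_add_inner (hS : IsQuasiContractionSemigroup S lam) {s u : ℝ}
    (hs : 0 ≤ s) (hsu : s ≤ u) (ha : IntegrableOn a (Icc 0 u)) :
    ‖mildSolution S X₀ a u‖ ^ 2 ≤ exp (2 * lam * (u - s)) * ‖mildSolution S X₀ a s‖ ^ 2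
      + 2 * ⟪mildSolution S X₀ a u, ∫ r in s..u, S (u - r) (a r)⟫ := by
  set x := mildSolution S X₀ a u
  set J := ∫ r in s..u, S (u - r) (a r)
  have hfree : ‖x - J‖ ≤ exp (lam * (u - s)) * ‖mildSolution S X₀ a s‖ := by
    rw [show x - J = S (u - s) (mildSolution S X₀ a s) from
      sub_eq_of_eq_add (hS.mildSolution_eq_add_integral hs hsu ha)]
    exact (S _).le_of_opNorm_le (hS.norm_le _ (sub_nonneg.2 hsu)) _
  calc ‖x‖ ^ 2 ≤ ‖x - J‖ ^ 2 + 2 * ⟪x, J⟫ := by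
        rw [norm_sub_sq_real]; nlinarith [sq_nonneg ‖J‖]
    _ ≤ (exp (lam * (u - s)) * ‖mildSolution S X₀ a s‖) ^ 2 + 2 * ⟪x, J⟫ := by gcongr
    _ = exp (2 * lam * (u - s)) * ‖mildSolution S X₀ a s‖ ^ 2 + 2 * ⟪x, J⟫ := by
        rw [mul_pow, ← exp_nat_mul]; ring_nf

theorem exp_mul_norm_mildSolution_sq_sub_le (hS : IsQuasiContractionSemigroup S lam) (t : ℝ)
    {s u : ℝ} (hs : 0 ≤ s) (hsu : s ≤ u) (ha : IntegrableOn a (Icc 0 u)) :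
    exp (2 * lam * (t - u)) * ‖mildSolution S X₀ a u‖ ^ 2
        - exp (2 * lam * (t - s)) * ‖mildSolution S X₀ a s‖ ^ 2
      ≤ ∫ r in s..u, 2 * exp (2 * lam * (t - u)) * ⟪mildSolution S X₀ a u, S (u - r) (a r)⟫ := by
  have hinner : ∫ r in s..u, ⟪mildSolution S X₀ a u, S (u - r) (a r)⟫
      = ⟪mildSolution S X₀ a u, ∫ r in s..u, S (u - r) (a r)⟫ :=
    (innerSL ℝ _).intervalIntegral_comp_comm (hS.intervalIntegrable_conv hs hsu le_rfl ha)
  have hweight : exp (2 * lam * (t - u)) * exp (2 * lam * (u - s)) = exp (2 * lam * (t - s)) := by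
    rw [← exp_add]; ring_nf
  rw [intervalIntegral.integral_const_mul, hinner, ← hweight]
  nlinarith [mul_le_mul_of_nonneg_left (hS.norm_mildSolution_sq_le_add_inner (X₀ := X₀) hs hsu ha)
    (exp_pos (2 * lam * (t - u))).le]

theorem norm_mildSolution_sq_le_integral (hS : IsQuasiContractionSemigroup S lam) {t : ℝ}
    (ht : 0 ≤ t) (ha : IntegrableOn a (Icc 0 t)) :
    ‖mildSolution S X₀ a t‖ ^ 2 ≤ exp (2 * lam * t) * ‖X₀‖ ^ 2
      + 2 * ∫ s in (0 : ℝ)..t, exp (2 * lam * (t - s)) * ⟪mildSolution S X₀ a s, a s⟫ := by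
  set C := exp (|lam| * t) * (‖X₀‖ + ∫ s in (0 : ℝ)..t, ‖a s‖) * exp (|lam| * t)
  have hweight : ∀ u ∈ Icc 0 t, ‖2 * exp (2 * lam * (t - u))‖ ≤ 2 * exp (2 * |lam| * t) :=
    fun u hu => by
      rw [norm_mul, Real.norm_two, Real.norm_of_nonneg (exp_pos _).le]
      gcongr 2 * ?_
      exact exp_le_exp.2 (by nlinarith [le_abs_self lam, abs_nonneg lam, hu.1, hu.2])
  have hexp : Continuous fun u => exp (2 * lam * (t - u)) :=
    (continuous_const.mul (continuous_const.sub continuous_id)).rexp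
  have key := sub_le_integral_of_tendsto
    (φ := fun u => exp (2 * lam * (t - u)) * ‖mildSolution S X₀ a u‖ ^ 2)
    (g := fun u r => 2 * exp (2 * lam * (t - u)) * ⟪mildSolution S X₀ a u, S (u - r) (a r)⟫)
    (f := fun r => 2 * (exp (2 * lam * (t - r)) * ⟪mildSolution S X₀ a r, a r⟫))
    (bound := fun r => 2 * exp (2 * |lam| * t) * (C * ‖a r‖)) ht
    (fun s u hs hsu hut => hS.exp_mul_norm_mildSolution_sq_sub_le t hs hsu
      (ha.mono_set (Icc_subset_Icc le_rfl hut)))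
    (fun s u hs hsu hut => (hS.intervalIntegrable_inner_conv _ hs hsu
      (ha.mono_set (Icc_subset_Icc le_rfl hut))).const_mul _)
    (fun u hut r hr => by
      rw [norm_mul]
      exact mul_le_mul (hweight u ⟨hr.1.le.trans hr.2, hut⟩)
        (hS.norm_inner_mildSolution_le hr.1.le hr.2 hut ha) (norm_nonneg _) (by positivity))
    ((((intervalIntegrable_iff_integrableOn_Icc_of_le ht).2 ha.norm).const_mul _).const_mul _)
    (fun r hr => by
      rw [← mul_assoc]
      exact ((hexp.tendsto r |>.mono_left nhdsWithin_le_nhds).const_mul 2).mul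
        (hS.tendsto_inner_mildSolution hr.1.le hr.2 ha (a r)))
  simp only [sub_self, mul_zero, exp_zero, one_mul, sub_zero, hS.mildSolution_zero,
    intervalIntegral.integral_const_mul] at key
  linarith

end Energy

end IsQuasiContractionSemigroup

theorem energy_type_inequality_general
    {H : Type*} [NormedAddCommGroup H] [InnerProductSpace ℝ H] [CompleteSpace H]
    (T : ℝ)
    (S : ℝ → H →L[ℝ] H)
    (hS0 : S 0 = ContinuousLinearMap.id ℝ H)
    (hSadd : ∀ s t : ℝ, 0 ≤ s → 0 ≤ t → S (s + t) = (S s).comp (S t))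
    (hScont : ∀ x : H, ContinuousOn (fun t => S t x) (Set.Ici (0 : ℝ)))
    (lam : ℝ)
    (hSbound : ∀ t : ℝ, 0 ≤ t → ‖S t‖ ≤ Real.exp (lam * t))
    (X₀ : H) (a : ℝ → H) (ha : IntegrableOn a (Set.Icc 0 T))
    (X : ℝ → H)
    (hX : ∀ t ∈ Set.Icc (0 : ℝ) T,
      X t = S t X₀ + ∫ s in (0 : ℝ)..t, S (t - s) (a s)) :
    ∀ t ∈ Set.Icc (0 : ℝ) T,
      ‖X t‖ ^ 2 ≤ Real.exp (2 * lam * t) * ‖X₀‖ ^ 2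
        + 2 * ∫ s in (0 : ℝ)..t, Real.exp (2 * lam * (t - s)) * ⟪X s, a s⟫ := by
  intro t ht
  have hS : IsQuasiContractionSemigroup S lam := ⟨hS0, hSadd, hScont, hSbound⟩
  have hmild : ∀ s ∈ Icc 0 t, X s = mildSolution S X₀ a s :=
    fun s hs => hX s ⟨hs.1, hs.2.trans ht.2⟩
  have hintegrand : ∫ s in (0 : ℝ)..t, exp (2 * lam * (t - s)) * ⟪X s, a s⟫
      = ∫ s in (0 : ℝ)..t, exp (2 * lam * (t - s)) * ⟪mildSolution S X₀ a s, a s⟫ :=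
    intervalIntegral.integral_congr fun s hs => by rw [hmild s (uIcc_of_le ht.1 ▸ hs)]
  rw [hmild t ⟨ht.1, le_rfl⟩, hintegrand]
  exact hS.norm_mildSolution_sq_le_integral ht.1 (ha.mono_set (Icc_subset_Icc le_rfl ht.2))

/-- Energy-type inequality (Proposition 2.3). -/
theorem energy_type_inequality
    {H : Type*} [NormedAddCommGroup H] [InnerProductSpace ℝ H] [CompleteSpace H]
    [TopologicalSpace.SeparableSpace H]
    (T : ℝ) (hT : 0 < T)
    (S : ℝ → H →L[ℝ] H)
    (hS0 : S 0 = ContinuousLinearMap.id ℝ H)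
    (hSadd : ∀ s t : ℝ, 0 ≤ s → 0 ≤ t → S (s + t) = (S s).comp (S t))
    (hScont : ∀ x : H, ContinuousOn (fun t => S t x) (Set.Ici (0 : ℝ)))
    (lam : ℝ) (hlam : 0 < lam)
    (hSbound : ∀ t : ℝ, 0 ≤ t → ‖S t‖ ≤ Real.exp (lam * t))
    (X₀ : H) (a : ℝ → H) (ha : IntegrableOn a (Set.Icc 0 T))
    (X : ℝ → H)
    (hX : ∀ t ∈ Set.Icc (0 : ℝ) T,
      X t = S t X₀ + ∫ s in (0 : ℝ)..t, S (t - s) (a s)) :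
    ∀ t ∈ Set.Icc (0 : ℝ) T,
      ‖X t‖ ^ 2 ≤ Real.exp (2 * lam * t) * ‖X₀‖ ^ 2
        + 2 * ∫ s in (0 : ℝ)..t, Real.exp (2 * lam * (t - s)) * ⟪X s, a s⟫ :=
  energy_type_inequality_general T S hS0 hSadd hScont lam hSbound X₀ a ha X hX
end

section
/- Let zⁿ, z : [0,T] → H be continuous functions with sup_{0≤t≤T} ‖zⁿ(t) − z(t)‖ → 0 as n → ∞. Then for every t ∈ [0,T] and every v ∈ L²([0,t];H), ∫₀ᵗ ⟨ S(t−s)( f(zⁿ(s)) − f(z(s)) ), v(s) ⟩ ds → 0 as n → ∞. (Convergence (3.9) in the proof of Theorem 3.1.) -/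
/-!
Dominated convergence. Writing `S(t-s)* v(s)` for the adjoint, the integrand at `s` is
`⟪f (zₙ s) - f (z s), S(t-s)* v(s)⟫`, which tends to `0` by demicontinuity. The `zₙ` are
eventually bounded uniformly on `[0,T]`, so by the growth condition and `‖S‖ ≤ 1` the integrands are
dominated by `K ‖v s‖`, integrable as `L² ⊆ L¹` on a bounded interval. Measurability is the delicate
point: `f ∘ zₙ` is only weakly continuous, so it is strongly measurable by Pettis' theorem
(`H` is separable), and `(r, x) ↦ S r x` is jointly continuous because `S` is uniformly bounded.
-/

open MeasureTheory Filter Topology Set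
open scoped RealInnerProductSpace Interval

theorem Orthonormal.countable {𝕜 E ι : Type*} [RCLike 𝕜] [NormedAddCommGroup E]
    [InnerProductSpace 𝕜 E] [TopologicalSpace.SeparableSpace E] {v : ι → E}
    (hv : Orthonormal 𝕜 v) : Countable ι := by
  refine Pairwise.countable_of_isOpen_disjoint (s := fun i => Metric.ball (v i) (1 / 2))
    (fun i j hij => Metric.ball_disjoint_ball ?_) (fun _ => Metric.isOpen_ball)
    (fun _ => Metric.nonempty_ball.2 (by norm_num))
  have hsq : ‖v i - v j‖ ^ 2 = 2 := by
    rw [@norm_sub_sq 𝕜, hv.inner_eq_zero hij, hv.1 i, hv.1 j]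
    norm_num
  rw [dist_eq_norm]
  nlinarith [norm_nonneg (v i - v j)]

theorem aestronglyMeasurable_of_forall_inner {𝕜 H α : Type*} [RCLike 𝕜]
    [NormedAddCommGroup H] [InnerProductSpace 𝕜 H] [CompleteSpace H]
    [TopologicalSpace.SeparableSpace H] [MeasurableSpace α] {μ : Measure α} {g : α → H}
    (hg : ∀ y, AEStronglyMeasurable (fun a => inner 𝕜 y (g a)) μ) : AEStronglyMeasurable g μ := by
  obtain ⟨w, b, -⟩ := exists_hilbertBasis 𝕜 H
  have := b.orthonormal.countable
  refine aestronglyMeasurable_of_tendsto_ae atTop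
    (f := fun (I : Finset w) a => ∑ i ∈ I, inner 𝕜 (b i) (g a) • b i)
    (fun I => Finset.aestronglyMeasurable_fun_sum _ fun i _ => (hg (b i)).smul_const _)
    (ae_of_all _ fun a => ?_)
  have h := b.hasSum_repr (g a)
  simp only [b.repr_apply_apply] at h
  exact h

theorem ContinuousOn.aestronglyMeasurable_comp_of_continuous_inner {α H : Type*}
    [TopologicalSpace α] [MeasurableSpace α] [OpensMeasurableSpace α]
    [NormedAddCommGroup H] [InnerProductSpace ℝ H] [CompleteSpace H]
    [TopologicalSpace.SeparableSpace H] {μ : Measure α} {f : H → H}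
    (hf : ∀ y, Continuous fun x => ⟪f x, y⟫) {u : α → H} {A : Set α}
    (hu : ContinuousOn u A) (hA : MeasurableSet A) :
    AEStronglyMeasurable (fun a => f (u a)) (μ.restrict A) :=
  aestronglyMeasurable_of_forall_inner fun y =>
    (((hf y).comp_continuousOn hu).aestronglyMeasurable hA).congr
      (ae_of_all _ fun _ => real_inner_comm _ _)

theorem continuous_apply_of_norm_le {𝕜 X E F : Type*} [NontriviallyNormedField 𝕜]
    [TopologicalSpace X] [SeminormedAddCommGroup E] [NormedSpace 𝕜 E]
    [SeminormedAddCommGroup F] [NormedSpace 𝕜 F] {S : X → E →L[𝕜] F} {K : ℝ}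
    (hS : ∀ x, Continuous fun r => S r x) (hK : ∀ r, ‖S r‖ ≤ K) :
    Continuous fun p : X × E => S p.1 p.2 := by
  refine continuous_iff_continuousAt.2 fun ⟨r₀, x₀⟩ => ?_
  have hsmall : Tendsto (fun p : X × E => S p.1 (p.2 - x₀)) (𝓝 (r₀, x₀)) (𝓝 0) := by
    refine squeeze_zero_norm (fun p => (S p.1).le_of_opNorm_le (hK p.1) _) ?_
    simpa using
      ((continuous_snd.sub (continuous_const (y := x₀))).norm.const_mul K).tendsto (r₀, x₀)
  have hmain := hsmall.add (((hS x₀).comp continuous_fst).tendsto (r₀, x₀))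
  simp only [zero_add, Function.comp_def, map_sub, sub_add_cancel] at hmain
  exact hmain

theorem aestronglyMeasurable_apply_sub {𝕜 E F : Type*} [NontriviallyNormedField 𝕜]
    [NormedAddCommGroup E] [NormedSpace 𝕜 E] [NormedAddCommGroup F] [NormedSpace 𝕜 F]
    {S : ℝ → E →L[𝕜] F} {K : ℝ} (hS : ∀ x, ContinuousOn (fun r => S r x) (Ici 0))
    (hK : ∀ r, 0 ≤ r → ‖S r‖ ≤ K) {μ : Measure ℝ} {t : ℝ} {A : Set ℝ}
    (hA : MeasurableSet A) (hAt : A ⊆ Iic t) {g : ℝ → E}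
    (hg : AEStronglyMeasurable g (μ.restrict A)) :
    AEStronglyMeasurable (fun s => S (t - s) (g s)) (μ.restrict A) := by
  -- extend `S` to negative times by `S 0`, which makes `(r, x) ↦ S r x` jointly continuous
  have hjoint : Continuous fun p : ℝ × E => S (max p.1 0) p.2 :=
    continuous_apply_of_norm_le (K := K)
      (fun x => (hS x).comp_continuous (continuous_id.max continuous_const)
        fun r => le_max_right r 0)
      fun r => hK _ (le_max_right r 0)
  refine (hjoint.comp_aestronglyMeasurable
    ((continuous_sub_left t).aestronglyMeasurable.prodMk hg)).congr ?_
  filter_upwards [ae_restrict_mem hA] with s hs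
  simp [max_eq_left (sub_nonneg.2 (mem_Iic.1 (hAt hs)))]

theorem aestronglyMeasurable_inner_apply_sub_comp {H : Type*} [NormedAddCommGroup H]
    [InnerProductSpace ℝ H] [CompleteSpace H] [TopologicalSpace.SeparableSpace H]
    {S : ℝ → H →L[ℝ] H} {K : ℝ} (hS : ∀ x, ContinuousOn (fun r => S r x) (Ici 0))
    (hK : ∀ r, 0 ≤ r → ‖S r‖ ≤ K) {f : H → H} (hf : ∀ y, Continuous fun x => ⟪f x, y⟫)
    {μ : Measure ℝ} {t : ℝ} {u w v : ℝ → H} (hu : ContinuousOn u (Ioc 0 t))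
    (hw : ContinuousOn w (Ioc 0 t)) (hv : AEStronglyMeasurable v (μ.restrict (Ioc 0 t))) :
    AEStronglyMeasurable (fun s => ⟪S (t - s) (f (u s) - f (w s)), v s⟫)
      (μ.restrict (Ioc 0 t)) :=
  (aestronglyMeasurable_apply_sub hS hK measurableSet_Ioc (fun _ hs => hs.2)
    ((hu.aestronglyMeasurable_comp_of_continuous_inner hf measurableSet_Ioc).sub
      (hw.aestronglyMeasurable_comp_of_continuous_inner hf measurableSet_Ioc))).inner hv

theorem TendstoUniformlyOn.eventually_forall_norm_le {ι α E : Type*}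
    [SeminormedAddCommGroup E] {l : Filter ι} {F : ι → α → E} {f : α → E} {A : Set α}
    (h : TendstoUniformlyOn F f l A) {M : ℝ} (hM : ∀ a ∈ A, ‖f a‖ ≤ M) :
    ∀ᶠ n in l, ∀ a ∈ A, ‖F n a‖ ≤ M + 1 := by
  filter_upwards [Metric.tendstoUniformlyOn_iff.1 h 1 one_pos] with n hn a ha
  calc ‖F n a‖ ≤ ‖f a‖ + dist (f a) (F n a) := by
        rw [dist_comm, dist_eq_norm]; exact norm_le_insert' _ _
    _ ≤ M + 1 := add_le_add (hM a ha) (hn a ha).le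

theorem norm_sub_le_of_norm_le_growth {E F : Type*} [SeminormedAddCommGroup E]
    [SeminormedAddCommGroup F] {f : E → F} {C : ℝ} {m : ℕ} (hC : 0 ≤ C)
    (hf : ∀ x, ‖f x‖ ≤ C * (1 + ‖x‖ ^ m)) {R : ℝ} {x y : E} (hx : ‖x‖ ≤ R) (hy : ‖y‖ ≤ R) :
    ‖f x - f y‖ ≤ 2 * C * (1 + R ^ m) := by
  have hbound : ∀ x : E, ‖x‖ ≤ R → ‖f x‖ ≤ C * (1 + R ^ m) := fun x hx =>
    (hf x).trans <| by gcongr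
  calc ‖f x - f y‖ ≤ ‖f x‖ + ‖f y‖ := norm_sub_le _ _
    _ ≤ 2 * C * (1 + R ^ m) := by linarith [hbound x hx, hbound y hy]

theorem IsCompact.exists_eventually_norm_sub_comp_le {ι α E F : Type*} [TopologicalSpace α]
    [SeminormedAddCommGroup E] [SeminormedAddCommGroup F] {l : Filter ι} {z : ι → α → E}
    {z₀ : α → E} {A : Set α} (hA : IsCompact A) (hz₀ : ContinuousOn z₀ A)
    (hz : TendstoUniformlyOn z z₀ l A) {f : E → F} {C : ℝ} {m : ℕ} (hC : 0 ≤ C)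
    (hf : ∀ x, ‖f x‖ ≤ C * (1 + ‖x‖ ^ m)) :
    ∃ K, ∀ᶠ n in l, ∀ a ∈ A, ‖f (z n a) - f (z₀ a)‖ ≤ K := by
  obtain ⟨M, hM⟩ := (hA.image_of_continuousOn hz₀).isBounded.exists_norm_le
  have hz₀_le : ∀ a ∈ A, ‖z₀ a‖ ≤ M := fun a ha => hM _ (mem_image_of_mem _ ha)
  refine ⟨2 * C * (1 + (M + 1) ^ m), ?_⟩
  filter_upwards [hz.eventually_forall_norm_le hz₀_le] with n hn a ha
  exact norm_sub_le_of_norm_le_growth hC hf (hn a ha) (by linarith [hz₀_le a ha])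

theorem norm_inner_apply_le {H : Type*} [NormedAddCommGroup H] [InnerProductSpace ℝ H]
    {A : H →L[ℝ] H} (hA : ‖A‖ ≤ 1) {w : H} {K : ℝ} (hw : ‖w‖ ≤ K) (y : H) :
    ‖⟪A w, y⟫‖ ≤ K * ‖y‖ := by
  calc ‖⟪A w, y⟫‖ ≤ ‖A w‖ * ‖y‖ := norm_inner_le_norm _ _
    _ ≤ K * ‖y‖ := by
      gcongr
      exact (A.le_of_opNorm_le_of_le hA hw).trans_eq (one_mul K)

theorem tendsto_inner_apply_sub_of_continuous_inner {ι H : Type*} [NormedAddCommGroup H]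
    [InnerProductSpace ℝ H] [CompleteSpace H] {f : H → H}
    (hf : ∀ y, Continuous fun x => ⟪f x, y⟫) (A : H →L[ℝ] H) {l : Filter ι} {x : ι → H}
    {x₀ : H} (hx : Tendsto x l (𝓝 x₀)) (y : H) :
    Tendsto (fun n => ⟪A (f (x n) - f x₀), y⟫) l (𝓝 0) := by
  have h := ((hf (A.adjoint y)).tendsto x₀).comp hx
  rw [← sub_self ⟪f x₀, A.adjoint y⟫]
  refine (h.sub tendsto_const_nhds).congr fun n => ?_
  rw [Function.comp_apply, ← inner_sub_left, ContinuousLinearMap.adjoint_inner_right]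

theorem weak_convergence_of_nonlinearity_general
    {H : Type*} [NormedAddCommGroup H] [InnerProductSpace ℝ H] [CompleteSpace H]
    [TopologicalSpace.SeparableSpace H]
    (T : ℝ)
    (S : ℝ → H →L[ℝ] H)
    (hScont : ∀ x : H, ContinuousOn (fun t => S t x) (Set.Ici (0 : ℝ)))
    (hScontr : ∀ t : ℝ, 0 ≤ t → ‖S t‖ ≤ 1)
    (f : H → H)
    (hf_demi : ∀ (x : ℕ → H) (x₀ : H), Filter.Tendsto x Filter.atTop (nhds x₀) →
      ∀ y : H, Filter.Tendsto (fun n => ⟪f (x n), y⟫) Filter.atTop (nhds ⟪f x₀, y⟫))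
    (C : ℝ) (hC : 0 < C) (m : ℕ)
    (hf_growth : ∀ x : H, ‖f x‖ ≤ C * (1 + ‖x‖ ^ m))
    (z : ℕ → ℝ → H) (z₀ : ℝ → H)
    (hz_cont : ∀ n, ContinuousOn (z n) (Set.Icc 0 T))
    (hz₀_cont : ContinuousOn z₀ (Set.Icc 0 T))
    (hz_conv : TendstoUniformlyOn z z₀ Filter.atTop (Set.Icc (0 : ℝ) T)) :
    ∀ t ∈ Set.Icc (0 : ℝ) T, ∀ v : ℝ → H,
      MemLp v 2 (volume.restrict (Set.Icc 0 t)) →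
      Filter.Tendsto
        (fun n => ∫ s in (0 : ℝ)..t, ⟪S (t - s) (f (z n s) - f (z₀ s)), v s⟫)
        Filter.atTop (nhds 0) := by
  intro t ⟨ht0, htT⟩ v hv
  have hf_weak : ∀ y, Continuous fun x => ⟪f x, y⟫ := fun y =>
    continuous_iff_seqContinuous.2 fun {x x₀} hx => hf_demi x x₀ hx y
  have hsub : Ι 0 t ⊆ Icc 0 T := fun s hs => by
    rw [uIoc_of_le ht0] at hs
    exact ⟨hs.1.le, hs.2.trans htT⟩
  obtain ⟨K, hK⟩ :=
    isCompact_Icc.exists_eventually_norm_sub_comp_le hz₀_cont hz_conv hC.le hf_growth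
  have hmeas : ∀ n, AEStronglyMeasurable (fun s => ⟪S (t - s) (f (z n s) - f (z₀ s)), v s⟫)
      (volume.restrict (Ι 0 t)) := fun n => by
    rw [uIoc_of_le ht0] at hsub ⊢
    exact aestronglyMeasurable_inner_apply_sub_comp hScont hScontr hf_weak
      ((hz_cont n).mono hsub) (hz₀_cont.mono hsub)
      (hv.aestronglyMeasurable.mono_measure (Measure.restrict_mono Ioc_subset_Icc_self le_rfl))
  have hdom : ∀ᶠ n in atTop, ∀ᵐ s, s ∈ Ι 0 t →
      ‖⟪S (t - s) (f (z n s) - f (z₀ s)), v s⟫‖ ≤ K * ‖v s‖ := by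
    filter_upwards [hK] with n hn
    refine ae_of_all _ fun s hs => norm_inner_apply_le (hScontr _ ?_) (hn s (hsub hs)) _
    exact sub_nonneg.2 (uIoc_of_le ht0 ▸ hs).2
  have hlim : ∀ᵐ s, s ∈ Ι 0 t →
      Tendsto (fun n => ⟪S (t - s) (f (z n s) - f (z₀ s)), v s⟫) atTop (𝓝 0) :=
    ae_of_all _ fun s hs =>
      tendsto_inner_apply_sub_of_continuous_inner hf_weak _ (hz_conv.tendsto_at (hsub hs)) _
  have hv_int : IntervalIntegrable (fun s => K * ‖v s‖) volume 0 t :=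
    (intervalIntegrable_iff_integrableOn_Icc_of_le ht0).2
      ((hv.integrable one_le_two).norm.const_mul K)
  simpa using intervalIntegral.tendsto_integral_filter_of_dominated_convergence _
    (Eventually.of_forall hmeas) hdom hv_int hlim

/-- Convergence (3.9) in the proof of Theorem 3.1. -/
theorem weak_convergence_of_nonlinearity
    {H : Type*} [NormedAddCommGroup H] [InnerProductSpace ℝ H] [CompleteSpace H]
    [TopologicalSpace.SeparableSpace H]
    (T : ℝ) (hT : 0 < T)
    (S : ℝ → H →L[ℝ] H)
    (hS0 : S 0 = ContinuousLinearMap.id ℝ H)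
    (hSadd : ∀ s t : ℝ, 0 ≤ s → 0 ≤ t → S (s + t) = (S s).comp (S t))
    (hScont : ∀ x : H, ContinuousOn (fun t => S t x) (Set.Ici (0 : ℝ)))
    (hScontr : ∀ t : ℝ, 0 ≤ t → ‖S t‖ ≤ 1)
    (f : H → H)
    (hf_demi : ∀ (x : ℕ → H) (x₀ : H), Filter.Tendsto x Filter.atTop (nhds x₀) →
      ∀ y : H, Filter.Tendsto (fun n => ⟪f (x n), y⟫) Filter.atTop (nhds ⟪f x₀, y⟫))
    (C : ℝ) (hC : 0 < C) (m : ℕ)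
    (hf_growth : ∀ x : H, ‖f x‖ ≤ C * (1 + ‖x‖ ^ m))
    (z : ℕ → ℝ → H) (z₀ : ℝ → H)
    (hz_cont : ∀ n, ContinuousOn (z n) (Set.Icc 0 T))
    (hz₀_cont : ContinuousOn z₀ (Set.Icc 0 T))
    (hz_conv : TendstoUniformlyOn z z₀ Filter.atTop (Set.Icc (0 : ℝ) T)) :
    ∀ t ∈ Set.Icc (0 : ℝ) T, ∀ v : ℝ → H,
      MemLp v 2 (volume.restrict (Set.Icc 0 t)) →
      Filter.Tendsto
        (fun n => ∫ s in (0 : ℝ)..t, ⟪S (t - s) (f (z n s) - f (z₀ s)), v s⟫)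
        Filter.atTop (nhds 0) :=
  weak_convergence_of_nonlinearity_general T S hScont hScontr f hf_demi C hC m hf_growth z z₀
    hz_cont hz₀_cont hz_conv
end

section
/- Let Ψ : [0,T] → L(U,H) be continuous in the operator norm and such that Ψ(s) is a compact operator for every s ∈ [0,T]. Let N > 0 and let uⁿ ∈ S_N converge weakly to u in L²([0,T];U), i.e. ∫₀ᵀ ⟨uⁿ(s) − u(s), v(s)⟩_U ds → 0 for every v ∈ L²([0,T];U). Then sup_{0≤t≤T} ‖ ∫₀ᵗ Ψ(s)( uⁿ(s) − u(s) ) ds ‖ → 0 as n → ∞. (Deterministic form of Lemma 2.7 as used in Section 4, where Ψ(s) = g(z⁰(s)) with g Hilbert–Schmidt-operator valued and Lipschitz, so that Ψ is operator-norm continuous with compact values.) -/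
open MeasureTheory Filter Topology Set
open scoped RealInnerProductSpace Interval InnerProduct ENNReal

/-!
Write `F n t = ∫₀ᵗ Ψ s (wₙ s) ds` with `wₙ = uₙ - u₀`. By Cauchy–Schwarz, an `L²` bound `K` on
the `wₙ` gives `‖F n t - F n t'‖ ≤ (sup ‖Ψ‖) K √|t - t'|`, so the `F n` are equicontinuous on
`[0, T]`, and on a compact set equicontinuity upgrades pointwise convergence to uniform
convergence.

For fixed `t`, weak convergence tested against `1_(0,t] Ψ(·)† e` gives `⟪F n t, e⟫ → 0` for every
`e`, hence `P (F n t) → 0` for every orthogonal projection `P` onto a finite-dimensional subspace.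
Since `Ψ([0, T])` is a compact set of compact operators, the images of the unit ball under all
`Ψ s` form one totally bounded set, so a single finite-dimensional `V` makes `‖P_Vᗮ ∘ Ψ s‖`
uniformly small, and with it the remainder `P_Vᗮ (F n t)`, uniformly in `n`.
-/

theorem EquicontinuousOn.tendstoUniformlyOn_of_tendsto {ι X α : Type*} [TopologicalSpace X]
    [UniformSpace α] {F : ι → X → α} {f : X → α} {l : Filter ι} {K : Set X}
    (hF : EquicontinuousOn F K) (hK : IsCompact K)
    (hFf : ∀ x ∈ K, Tendsto (F · x) l (𝓝 (f x))) :
    TendstoUniformlyOn F f l K := by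
  have : CompactSpace K := isCompact_iff_compactSpace.mp hK
  rw [tendstoUniformlyOn_iff_tendstoUniformly_comp_coe]
  refine UniformFun.tendsto_iff_tendstoUniformly.mp
    (((equicontinuous_restrict_iff F).mpr hF |>.tendsto_uniformFun_iff_pi l _).mpr ?_)
  exact tendsto_pi_nhds.mpr fun x => hFf x x.2

section CauchySchwarz

variable {α E : Type*} [MeasurableSpace α] {μ : Measure α} [NormedAddCommGroup E]

theorem integral_norm_le_sqrt_mul_sqrt [IsFiniteMeasure μ] {f : α → E} (hf : MemLp f 2 μ) :
    ∫ x, ‖f x‖ ∂μ ≤ √(μ.real univ) * √(∫ x, ‖f x‖ ^ 2 ∂μ) := by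
  have h := integral_mul_le_Lp_mul_Lq_of_nonneg (μ := μ) Real.HolderConjugate.two_two
    (f := fun _ => (1 : ℝ)) (g := fun x => ‖f x‖) (ae_of_all _ fun _ => zero_le_one)
    (ae_of_all _ fun _ => norm_nonneg _) (by simpa using memLp_const (1 : ℝ))
    (by simpa using hf.norm)
  simpa [Real.sqrt_eq_rpow] using h

theorem setIntegral_norm_le_sqrt_mul_sqrt {s S : Set α} {f : α → E}
    (hf : MemLp f 2 (μ.restrict S)) (hsS : s ⊆ S) (hμs : μ s ≠ ∞) :
    ∫ x in s, ‖f x‖ ∂μ ≤ √(μ.real s) * √(∫ x in S, ‖f x‖ ^ 2 ∂μ) := by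
  have : IsFiniteMeasure (μ.restrict s) := isFiniteMeasure_restrict.mpr hμs
  calc ∫ x in s, ‖f x‖ ∂μ ≤ √(μ.real s) * √(∫ x in s, ‖f x‖ ^ 2 ∂μ) := by
        simpa using
          integral_norm_le_sqrt_mul_sqrt (hf.mono_measure (Measure.restrict_mono hsS le_rfl))
    _ ≤ √(μ.real s) * √(∫ x in S, ‖f x‖ ^ 2 ∂μ) := by
        refine mul_le_mul_of_nonneg_left (Real.sqrt_le_sqrt ?_) (Real.sqrt_nonneg _)
        exact setIntegral_mono_set hf.norm.integrable_sq (ae_of_all _ fun _ => by positivity)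
          hsS.eventuallyLE

theorem setIntegral_norm_sub_le_sqrt_mul {s S : Set α} {f g : α → E}
    (hf : MemLp f 2 (μ.restrict S)) (hg : MemLp g 2 (μ.restrict S)) (hsS : s ⊆ S)
    (hμs : μ s ≠ ∞) :
    ∫ x in s, ‖f x - g x‖ ∂μ ≤
      (√(∫ x in S, ‖f x‖ ^ 2 ∂μ) + √(∫ x in S, ‖g x‖ ^ 2 ∂μ)) * √(μ.real s) := by
  have : IsFiniteMeasure (μ.restrict s) := isFiniteMeasure_restrict.mpr hμs
  have hfs := (hf.mono_measure (Measure.restrict_mono hsS le_rfl)).integrable one_le_two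
  have hgs := (hg.mono_measure (Measure.restrict_mono hsS le_rfl)).integrable one_le_two
  calc ∫ x in s, ‖f x - g x‖ ∂μ ≤ ∫ x in s, ‖f x‖ ∂μ + ∫ x in s, ‖g x‖ ∂μ := by
        rw [← integral_add hfs.norm hgs.norm]
        exact integral_mono (hfs.sub hgs).norm (hfs.norm.add hgs.norm) fun x => norm_sub_le _ _
    _ ≤ _ := by
        linarith [setIntegral_norm_le_sqrt_mul_sqrt hf hsS hμs,
          setIntegral_norm_le_sqrt_mul_sqrt hg hsS hμs]

end CauchySchwarz

section Hilbert

variable {H : Type*} [NormedAddCommGroup H] [InnerProductSpace ℝ H]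

theorem Submodule.norm_starProjection_orthogonal_le (V : Submodule ℝ H)
    [V.HasOrthogonalProjection] (y : H) {v : H} (hv : v ∈ V) :
    ‖Vᗮ.starProjection y‖ ≤ ‖y - v‖ := by
  rw [starProjection_orthogonal_val, starProjection_minimal]
  exact ciInf_le ⟨0, by rintro _ ⟨z, rfl⟩; exact norm_nonneg _⟩ (⟨v, hv⟩ : V)

theorem TotallyBounded.exists_finiteDimensional_norm_starProjection_orthogonal_le {s : Set H}
    (hs : TotallyBounded s) {ε : ℝ} (hε : 0 < ε) :
    ∃ (V : Submodule ℝ H) (_ : FiniteDimensional ℝ V), ∀ y ∈ s, ‖Vᗮ.starProjection y‖ ≤ ε := by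
  obtain ⟨F, hF, hsF⟩ := Metric.totallyBounded_iff.mp hs ε hε
  have := FiniteDimensional.span_of_finite ℝ hF
  refine ⟨Submodule.span ℝ F, this, fun y hy => ?_⟩
  obtain ⟨z, hz, hyz⟩ := mem_iUnion₂.mp (hsF hy)
  rw [Metric.mem_ball, dist_eq_norm] at hyz
  exact ((Submodule.span ℝ F).norm_starProjection_orthogonal_le y
    (Submodule.subset_span hz)).trans hyz.le

theorem tendsto_starProjection_of_forall_tendsto_inner {ι : Type*} {l : Filter ι} {y : ι → H}
    (hy : ∀ e, Tendsto (fun n => ⟪y n, e⟫) l (𝓝 0)) (V : Submodule ℝ H)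
    [FiniteDimensional ℝ V] :
    Tendsto (fun n => V.starProjection (y n)) l (𝓝 0) := by
  let b := stdOrthonormalBasis ℝ V
  simp_rw [Submodule.starProjection_apply, b.orthogonalProjectionOnto_apply_eq_sum]
  push_cast
  simpa using tendsto_finsetSum Finset.univ fun i _ =>
    ((hy (b i)).congr fun n => real_inner_comm _ _).smul_const (b i : H)

theorem tendsto_zero_of_forall_tendsto_inner_of_approx {ι : Type*} {l : Filter ι} {y : ι → H}
    (hy : ∀ e, Tendsto (fun n => ⟪y n, e⟫) l (𝓝 0))
    (happrox : ∀ ε > 0, ∃ (V : Submodule ℝ H) (_ : FiniteDimensional ℝ V),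
      ∀ n, ‖Vᗮ.starProjection (y n)‖ ≤ ε) :
    Tendsto y l (𝓝 0) := by
  refine Metric.tendsto_nhds.mpr fun ε hε => ?_
  obtain ⟨V, _, hV⟩ := happrox (ε / 2) (half_pos hε)
  filter_upwards [Metric.tendsto_nhds.mp (tendsto_starProjection_of_forall_tendsto_inner hy V)
    (ε / 2) (half_pos hε)] with n hn
  rw [dist_zero_right] at hn ⊢
  calc ‖y n‖ = ‖V.starProjection (y n) + Vᗮ.starProjection (y n)‖ := by
        rw [Submodule.starProjection_orthogonal_val, add_sub_cancel]
    _ ≤ ‖V.starProjection (y n)‖ + ‖Vᗮ.starProjection (y n)‖ := norm_add_le _ _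
    _ < ε := by linarith [hV n]

end Hilbert

section CompactOperators

variable {U H : Type*} [NormedAddCommGroup U] [NormedSpace ℝ U] [NormedAddCommGroup H]

theorem IsCompact.totallyBounded_biUnion_image_closedBall [NormedSpace ℝ H]
    {S : Set (U →L[ℝ] H)} (hS : IsCompact S) (hSc : ∀ A ∈ S, IsCompactOperator A) :
    TotallyBounded (⋃ A ∈ S, A '' Metric.closedBall 0 1) := by
  refine Metric.totallyBounded_iff.mpr fun ε hε => ?_
  obtain ⟨t, htS, ht, hSt⟩ := hS.finite_cover_balls (half_pos hε)
  have hnet : ∀ A ∈ t, ∃ F : Set H, F.Finite ∧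
      A '' Metric.closedBall 0 1 ⊆ ⋃ y ∈ F, Metric.ball y (ε / 2) := fun A hA => by
    obtain ⟨K, hK, hAK⟩ := (hSc A (htS hA)).image_closedBall_subset_compact 1
    exact Metric.totallyBounded_iff.mp (hK.totallyBounded.subset hAK) _ (half_pos hε)
  choose! F hF hAF using hnet
  refine ⟨⋃ A ∈ t, F A, ht.biUnion hF, ?_⟩
  intro z hz
  obtain ⟨B, hB, x, hx, rfl⟩ : ∃ B ∈ S, ∃ x ∈ Metric.closedBall (0 : U) 1, B x = z := by
    simpa using hz
  obtain ⟨A, hA, hBA⟩ := mem_iUnion₂.mp (hSt hB)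
  obtain ⟨y, hy, hAy⟩ := mem_iUnion₂.mp (hAF A hA ⟨x, hx, rfl⟩)
  refine mem_iUnion₂.mpr ⟨y, mem_iUnion₂.mpr ⟨A, hA, hy⟩, ?_⟩
  have hBAx : dist (B x) (A x) < ε / 2 := by
    rw [mem_closedBall_zero_iff] at hx
    calc dist (B x) (A x) = ‖(B - A) x‖ := by rw [dist_eq_norm, sub_apply]
      _ ≤ ‖B - A‖ * ‖x‖ := (B - A).le_opNorm x
      _ ≤ ‖B - A‖ := mul_le_of_le_one_right (norm_nonneg _) hx
      _ < ε / 2 := by rwa [← dist_eq_norm]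
  exact (dist_triangle _ _ _).trans_lt (by linarith [Metric.mem_ball.mp hAy])

theorem IsCompact.exists_finiteDimensional_norm_starProjection_orthogonal_comp_le
    [InnerProductSpace ℝ H] {S : Set (U →L[ℝ] H)} (hS : IsCompact S)
    (hSc : ∀ A ∈ S, IsCompactOperator A) {ε : ℝ} (hε : 0 < ε) :
    ∃ (V : Submodule ℝ H) (_ : FiniteDimensional ℝ V),
      ∀ A ∈ S, ‖Vᗮ.starProjection ∘L A‖ ≤ ε := by
  obtain ⟨V, hV, hVε⟩ := (hS.totallyBounded_biUnion_image_closedBall hSc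
    ).exists_finiteDimensional_norm_starProjection_orthogonal_le hε
  refine ⟨V, hV, fun A hA => ContinuousLinearMap.opNorm_le_of_unit_norm hε.le fun x hx => ?_⟩
  exact hVε _ (mem_iUnion₂.mpr ⟨A, hA, x, by simp [hx], rfl⟩)

end CompactOperators

section OperatorIntegrals

variable {U H : Type*} [NormedAddCommGroup U] [NormedSpace ℝ U]
  [NormedAddCommGroup H] [NormedSpace ℝ H] {Ψ : ℝ → U →L[ℝ] H} {μ : Measure ℝ}

theorem ContinuousOn.integrableOn_apply {K : Set ℝ} (hΨ : ContinuousOn Ψ K) (hK : IsCompact K)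
    (hKm : MeasurableSet K) {w : ℝ → U} (hw : IntegrableOn w K μ) :
    IntegrableOn (fun s => Ψ s (w s)) K μ := by
  obtain ⟨C, hC⟩ := hK.exists_bound_of_continuousOn hΨ
  refine (hw.norm.const_mul C).mono' ?_ ?_
  · exact isBoundedBilinearMap_apply.continuous.comp_aestronglyMeasurable
      ((hΨ.aestronglyMeasurable hKm).prodMk hw.1)
  · filter_upwards [ae_restrict_mem hKm] with s hs
    exact (Ψ s).le_of_opNorm_le (hC s hs) _

theorem norm_setIntegral_apply_le {s K : Set ℝ} {C : ℝ} (hC : ∀ x ∈ K, ‖Ψ x‖ ≤ C)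
    (hs : MeasurableSet s) (hsK : s ⊆ K) {w : ℝ → U} (hw : IntegrableOn w s μ) :
    ‖∫ x in s, Ψ x (w x) ∂μ‖ ≤ C * ∫ x in s, ‖w x‖ ∂μ := by
  rw [← integral_const_mul]
  refine norm_integral_le_of_norm_le (hw.norm.const_mul C) ?_
  filter_upwards [ae_restrict_mem hs] with x hx
  exact (Ψ x).le_of_opNorm_le (hC x (hsK hx)) _

theorem equicontinuousOn_intervalIntegral_apply {ι : Type*} {a b K : ℝ}
    (hΨ : ContinuousOn Ψ (Icc a b)) {w : ι → ℝ → U} (hw : ∀ n, IntegrableOn (w n) (Icc a b))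
    (hL1 : ∀ n, ∀ s ⊆ Icc a b, ∫ x in s, ‖w n x‖ ≤ K * √(volume.real s)) :
    EquicontinuousOn (fun n t => ∫ s in a..t, Ψ s (w n s)) (Icc a b) := by
  obtain ⟨C, hC⟩ := isCompact_Icc.exists_bound_of_continuousOn hΨ
  have hΨw : ∀ n, IntegrableOn (fun s => Ψ s (w n s)) (Icc a b) := fun n =>
    hΨ.integrableOn_apply isCompact_Icc measurableSet_Icc (hw n)
  rw [← equicontinuous_restrict_iff]
  refine Metric.equicontinuous_of_continuity_modulus (fun r => C * K * √r) ?_ _ fun x y n => ?_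
  · exact (by fun_prop : Continuous fun r => C * K * √r).tendsto' 0 0 (by simp)
  have hab : a ≤ b := x.2.1.trans x.2.2
  have hsub : ∀ z ∈ Icc a b, IntervalIntegrable (fun s => Ψ s (w n s)) volume a z := fun z hz =>
    ((hΨw n).mono_set (uIcc_subset_Icc (left_mem_Icc.mpr hab) hz)).intervalIntegrable
  have hyx : Ι (y : ℝ) x ⊆ Icc a b := uIoc_subset_uIcc.trans (uIcc_subset_Icc y.2 x.2)
  have hvol : volume.real (Ι (y : ℝ) x) = dist x y := by
    rw [measureReal_def, Real.volume_uIoc, ENNReal.toReal_ofReal (abs_nonneg _),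
      Subtype.dist_eq, Real.dist_eq, abs_sub_comm]
  calc dist (∫ s in a..x, Ψ s (w n s)) (∫ s in a..y, Ψ s (w n s))
      = ‖∫ s in y..x, Ψ s (w n s)‖ := by
        rw [dist_eq_norm, intervalIntegral.integral_interval_sub_left (hsub x x.2) (hsub y y.2)]
    _ = ‖∫ s in Ι (y : ℝ) x, Ψ s (w n s)‖ := intervalIntegral.norm_integral_eq_norm_integral_uIoc _
    _ ≤ C * ∫ s in Ι (y : ℝ) x, ‖w n s‖ :=
        norm_setIntegral_apply_le hC measurableSet_uIoc hyx ((hw n).mono_set hyx)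
    _ ≤ C * (K * √(volume.real (Ι (y : ℝ) x))) :=
        mul_le_mul_of_nonneg_left (hL1 n _ hyx) ((norm_nonneg _).trans (hC x x.2))
    _ = C * K * √(dist x y) := by rw [hvol, mul_assoc]

end OperatorIntegrals

section WeakConvergence

variable {U H : Type*} [NormedAddCommGroup U] [InnerProductSpace ℝ U] [CompleteSpace U]
  [NormedAddCommGroup H] [InnerProductSpace ℝ H] [CompleteSpace H] {Ψ : ℝ → U →L[ℝ] H}
  {a b t : ℝ}

theorem inner_intervalIntegral_apply_eq_integral_inner_indicator (ht : t ∈ Icc a b)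
    {w : ℝ → U} (hΨw : IntegrableOn (fun s => Ψ s (w s)) (Icc a b)) (e : H) :
    ⟪∫ s in a..t, Ψ s (w s), e⟫ =
      ∫ s in a..b, ⟪w s, (Ioc a t).indicator (fun s => ((Ψ s)†) e) s⟫ := by
  have hsub : Ioc a t ⊆ Icc a b := Ioc_subset_Icc_self.trans (Icc_subset_Icc_right ht.2)
  rw [intervalIntegral.integral_of_le ht.1, intervalIntegral.integral_of_le (ht.1.trans ht.2),
    real_inner_comm, ← integral_inner (hΨw.mono_set hsub)]
  have hind : ∀ s, ⟪w s, (Ioc a t).indicator (fun s => ((Ψ s)†) e) s⟫ =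
      (Ioc a t).indicator (fun s => ⟪e, Ψ s (w s)⟫) s := fun s => by
    by_cases hs : s ∈ Ioc a t <;>
      simp [hs, ContinuousLinearMap.adjoint_inner_right, real_inner_comm]
  simp_rw [hind]
  rw [setIntegral_indicator measurableSet_Ioc,
    inter_eq_right.mpr (Ioc_subset_Ioc_right ht.2)]

theorem ContinuousOn.memLp_indicator_adjoint_apply (hΨ : ContinuousOn Ψ (Icc a b)) (e : H)
    (p : ℝ≥0∞) :
    MemLp ((Ioc a t).indicator fun s => ((Ψ s)†) e) p (volume.restrict (Icc a b)) := by
  have hcont : ContinuousOn (fun s => ((Ψ s)†) e) (Icc a b) :=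
    ((ContinuousLinearMap.apply ℝ U e).continuous.comp
      ContinuousLinearMap.adjoint.continuous).comp_continuousOn hΨ
  obtain ⟨C, hC⟩ := isCompact_Icc.exists_bound_of_continuousOn hcont
  exact .indicator measurableSet_Ioc (.of_bound (hcont.aestronglyMeasurable measurableSet_Icc) C
    (ae_restrict_of_forall_mem measurableSet_Icc hC))

theorem tendsto_intervalIntegral_apply_of_weak {ι : Type*} {l : Filter ι} {B : ℝ}
    (hΨ : ContinuousOn Ψ (Icc a b)) (hΨc : ∀ s ∈ Icc a b, IsCompactOperator (Ψ s))
    {w : ι → ℝ → U} (hw : ∀ n, IntegrableOn (w n) (Icc a b))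
    (hB : ∀ n, ∫ x in Icc a b, ‖w n x‖ ≤ B)
    (hweak : ∀ v : ℝ → U, MemLp v 2 (volume.restrict (Icc a b)) →
      Tendsto (fun n => ∫ s in a..b, ⟪w n s, v s⟫) l (𝓝 0))
    (ht : t ∈ Icc a b) :
    Tendsto (fun n => ∫ s in a..t, Ψ s (w n s)) l (𝓝 0) := by
  have hΨw : ∀ n, IntegrableOn (fun s => Ψ s (w n s)) (Icc a b) := fun n =>
    hΨ.integrableOn_apply isCompact_Icc measurableSet_Icc (hw n)
  have hsub : Ioc a t ⊆ Icc a b := Ioc_subset_Icc_self.trans (Icc_subset_Icc_right ht.2)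
  refine tendsto_zero_of_forall_tendsto_inner_of_approx (fun e => ?_) fun ε hε => ?_
  · simpa only [inner_intervalIntegral_apply_eq_integral_inner_indicator ht (hΨw _)] using
      hweak _ (hΨ.memLp_indicator_adjoint_apply e 2)
  obtain ⟨δ, hδ, hBδ⟩ := exists_pos_mul_lt hε B
  obtain ⟨V, _, hV⟩ := (isCompact_Icc.image_of_continuousOn hΨ
    ).exists_finiteDimensional_norm_starProjection_orthogonal_comp_le
    (forall_mem_image.mpr hΨc) hδ
  refine ⟨V, inferInstance, fun n => ?_⟩
  rw [intervalIntegral.integral_of_le ht.1,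
    ← ContinuousLinearMap.integral_comp_comm _ ((hΨw n).mono_set hsub)]
  calc ‖∫ s in Ioc a t, (Vᗮ.starProjection ∘L Ψ s) (w n s)‖
      ≤ δ * ∫ s in Ioc a t, ‖w n s‖ :=
        norm_setIntegral_apply_le (fun s hs => hV _ (mem_image_of_mem Ψ hs)) measurableSet_Ioc
          hsub ((hw n).mono_set hsub)
    _ ≤ δ * B := by
        refine mul_le_mul_of_nonneg_left ((setIntegral_mono_set (hw n).norm ?_ ?_).trans (hB n))
          hδ.le
        · exact ae_of_all _ fun s => norm_nonneg _
        · exact hsub.eventuallyLE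
    _ ≤ ε := by linarith

end WeakConvergence

theorem uniform_convergence_weak_controls_general
    {H : Type*} [NormedAddCommGroup H] [InnerProductSpace ℝ H] [CompleteSpace H]
    {U : Type*} [NormedAddCommGroup U] [InnerProductSpace ℝ U] [CompleteSpace U]
    (T : ℝ) (hT : 0 < T)
    (Ψ : ℝ → U →L[ℝ] H)
    (hΨ_cont : ContinuousOn Ψ (Set.Icc 0 T))
    (hΨ_cpt : ∀ s ∈ Set.Icc (0 : ℝ) T, IsCompactOperator (Ψ s))
    (N : ℝ)
    (u : ℕ → ℝ → U) (u₀ : ℝ → U)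
    (hu : ∀ n, MemLp (u n) 2 (volume.restrict (Set.Icc 0 T)))
    (huN : ∀ n, (∫ s in (0 : ℝ)..T, ‖u n s‖ ^ 2) ≤ N)
    (hu₀ : MemLp u₀ 2 (volume.restrict (Set.Icc 0 T)))
    (hu_weak : ∀ v : ℝ → U, MemLp v 2 (volume.restrict (Set.Icc 0 T)) →
      Filter.Tendsto (fun n => ∫ s in (0 : ℝ)..T, ⟪u n s - u₀ s, v s⟫)
        Filter.atTop (nhds 0)) :
    TendstoUniformlyOn
      (fun n t => ∫ s in (0 : ℝ)..t, Ψ s (u n s - u₀ s))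
      (fun _ => 0) Filter.atTop (Set.Icc (0 : ℝ) T) := by
  set K := √N + √(∫ s in Icc 0 T, ‖u₀ s‖ ^ 2)
  have hw : ∀ n, IntegrableOn (fun s => u n s - u₀ s) (Icc 0 T) := fun n =>
    ((hu n).sub hu₀).integrable one_le_two
  have hL1 : ∀ n, ∀ s ⊆ Icc 0 T, ∫ x in s, ‖u n x - u₀ x‖ ≤ K * √(volume.real s) := by
    intro n s hs
    have hu_sq : ∫ x in Icc 0 T, ‖u n x‖ ^ 2 ≤ N := by
      simpa [intervalIntegral.integral_of_le hT.le, integral_Icc_eq_integral_Ioc] using huN n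
    refine (setIntegral_norm_sub_le_sqrt_mul (hu n) hu₀ hs
      (measure_mono hs |>.trans_lt measure_Icc_lt_top).ne).trans ?_
    exact mul_le_mul_of_nonneg_right (add_le_add_left (Real.sqrt_le_sqrt hu_sq) _)
      (Real.sqrt_nonneg _)
  exact (equicontinuousOn_intervalIntegral_apply hΨ_cont hw hL1).tendstoUniformlyOn_of_tendsto
    isCompact_Icc fun t ht => tendsto_intervalIntegral_apply_of_weak hΨ_cont hΨ_cpt hw
      (fun n => hL1 n _ subset_rfl) hu_weak ht

/-- Deterministic form of Lemma 2.7 as used in Section 4: uniform convergence of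
convolutions against weakly convergent controls, for operator-norm continuous,
compact-operator-valued `Ψ`. -/
theorem uniform_convergence_weak_controls
    {H : Type*} [NormedAddCommGroup H] [InnerProductSpace ℝ H] [CompleteSpace H]
    [TopologicalSpace.SeparableSpace H]
    {U : Type*} [NormedAddCommGroup U] [InnerProductSpace ℝ U] [CompleteSpace U]
    [TopologicalSpace.SeparableSpace U]
    (T : ℝ) (hT : 0 < T)
    (Ψ : ℝ → U →L[ℝ] H)
    (hΨ_cont : ContinuousOn Ψ (Set.Icc 0 T))
    (hΨ_cpt : ∀ s ∈ Set.Icc (0 : ℝ) T, IsCompactOperator (Ψ s))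
    (N : ℝ) (hN : 0 < N)
    (u : ℕ → ℝ → U) (u₀ : ℝ → U)
    (hu : ∀ n, MemLp (u n) 2 (volume.restrict (Set.Icc 0 T)))
    (huN : ∀ n, (∫ s in (0 : ℝ)..T, ‖u n s‖ ^ 2) ≤ N)
    (hu₀ : MemLp u₀ 2 (volume.restrict (Set.Icc 0 T)))
    (hu_weak : ∀ v : ℝ → U, MemLp v 2 (volume.restrict (Set.Icc 0 T)) →
      Filter.Tendsto (fun n => ∫ s in (0 : ℝ)..T, ⟪u n s - u₀ s, v s⟫)
        Filter.atTop (nhds 0)) :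
    TendstoUniformlyOn
      (fun n t => ∫ s in (0 : ℝ)..t, Ψ s (u n s - u₀ s))
      (fun _ => 0) Filter.atTop (Set.Icc (0 : ℝ) T) :=
  uniform_convergence_weak_controls_general T hT Ψ hΨ_cont hΨ_cpt N u u₀ hu huN hu₀ hu_weak
end
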